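/- Kruskal's theorem for labelled trees implies Higman's theorem for ordered algebras: if (A, M, ≤) is an ordered algebra where (M, ⊲) is a wqo of operations, ≤ is a divisibility order compatible with ⊲, and A is generated by a wqo subset C, then (A, ≤) is a wqo. The proof constructs the set of graded trees over C ∪ M (trees where each node's number of children equals the arity/grade of its label), defines an evaluation map φ from graded trees to A, and shows φ is an order-preserving surjection. -/

import Mathlib

universe u

/-- Finite ordered trees with labels in `Q`. -/
inductive LTree (Q : Type u) : Type u
  | node : Q → List (LTree Q) → LTree Q

mutual
  /-- Tree embeddability: `Emb r t s` iff `t` embeds into a subtree of `s`, or the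
  roots compare via `r` and the lists of immediate subtrees compare in Higman's
  order induced by embeddability. -/
  inductive Emb {Q : Type u} (r : Q → Q → Prop) : LTree Q → LTree Q → Prop
    | subtree {t s : LTree Q} {q : Q} {ss : List (LTree Q)} :
        Emb r t s → s ∈ ss → Emb r t (.node q ss)
    | node {p q : Q} {ts ss : List (LTree Q)} :
        r p q → ListEmb r ts ss → Emb r (.node p ts) (.node q ss)

  /-- Higman's embedding between lists of trees, with `Emb r` on the elements. -/
  inductive ListEmb {Q : Type u} (r : Q → Q → Prop) : List (LTree Q) → List (LTree Q) → Prop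
    | nil : ListEmb r [] []
    | cons {t s : LTree Q} {ts ss : List (LTree Q)} :
        Emb r t s → ListEmb r ts ss → ListEmb r (t :: ts) (s :: ss)
    | skip {s : LTree Q} {ts ss : List (LTree Q)} :
        ListEmb r ts ss → ListEmb r ts (s :: ss)
end

def IsWqo {α : Type*} (r : α → α → Prop) : Prop :=
  ∀ f : ℕ → α, ∃ i j : ℕ, i < j ∧ r (f i) (f j)

/-- Higman's embedding order on finite sequences. -/
def HigmanLE {α : Type*} (r : α → α → Prop) (l₁ l₂ : List α) : Prop :=
  ∃ l' : List α, l'.Sublist l₂ ∧ List.Forall₂ r l₁ l'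

/-!
Label trees by `C ⊕ M`, ordered by `≤` on `C` and by `⊲` on `M`. The paper's graded trees and
their evaluation map `φ` are encoded as the relation `EvalsTo`: `C`-labels are leaves, an
`M`-node has as many children as its arity, and the node evaluates by applying the operation.
Since `C` generates `A`, every element is the value of some tree. A tree embedding gives `≤`
between the values: descending into a subtree costs nothing by divisibility, and matching two
nodes with Higman-related child lists is exactly compatibility with `⊲`. So Kruskal's theorem for
the (wqo) label order `C ⊕ M` transfers to `A`.
-/

theorem WellQuasiOrdered.sumLiftRel {α β : Type*} {r : α → α → Prop} {s : β → β → Prop}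
    (hr : WellQuasiOrdered r) (hs : WellQuasiOrdered s) :
    WellQuasiOrdered (Sum.LiftRel r s) := by
  rw [← Set.partiallyWellOrderedOn_univ_iff, ← Set.range_inl_union_range_inr,
    ← Set.image_univ, ← Set.image_univ]
  exact ((Set.partiallyWellOrderedOn_univ_iff.mpr hr).image_of_monotone_on
    fun _ _ _ _ => .inl).union
    ((Set.partiallyWellOrderedOn_univ_iff.mpr hs).image_of_monotone_on fun _ _ _ _ => .inr)

theorem List.forall₂_ofFn {α β : Type*} {R : α → β → Prop} :
    ∀ {n : ℕ} {f : Fin n → α} {g : Fin n → β}, (∀ i, R (f i) (g i)) →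
      List.Forall₂ R (List.ofFn f) (List.ofFn g)
  | 0, _, _, _ => by simp
  | _ + 1, _, _, h => by
    simpa only [List.ofFn_succ, List.forall₂_cons] using ⟨h 0, List.forall₂_ofFn fun i => h i.succ⟩

theorem higmanLE_iff_sublistForall₂ {α : Type*} {r : α → α → Prop} {l₁ l₂ : List α} :
    HigmanLE r l₁ l₂ ↔ List.SublistForall₂ r l₁ l₂ := by
  simp only [HigmanLE, List.sublistForall₂_iff, and_comm]

section Evaluation

variable {C M A : Type} {arity : M → ℕ} (ι : C → A) (app : ∀ μ : M, (Fin (arity μ) → A) → A)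

inductive EvalsTo : LTree (C ⊕ M) → A → Prop
  | leaf (c : C) : EvalsTo (.node (.inl c) []) (ι c)
  | node (μ : M) (ts : Fin (arity μ) → LTree (C ⊕ M)) (a : Fin (arity μ) → A) :
      (∀ i, EvalsTo (ts i) (a i)) → EvalsTo (.node (.inr μ) (List.ofFn ts)) (app μ a)

theorem exists_evalsTo
    (hgen : ∀ B : Set A, (∀ c : C, ι c ∈ B) →
      (∀ (μ : M) (a : Fin (arity μ) → A), (∀ i, a i ∈ B) → app μ a ∈ B) → ∀ x : A, x ∈ B)
    (x : A) : ∃ t, EvalsTo ι app t x :=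
  hgen {x | ∃ t, EvalsTo ι app t x} (fun c => ⟨_, .leaf c⟩)
    (fun μ a ha => by
      choose ts hts using ha
      exact ⟨_, .node μ ts a hts⟩) x

variable {ι app} {le : A → A → Prop} {tri : M → M → Prop}

mutual

theorem EvalsTo.le_of_emb [IsTrans A le]
    (hdiv : ∀ (μ : M) (a : Fin (arity μ) → A) (i : Fin (arity μ)), le (a i) (app μ a))
    (hcompat : ∀ (lam mu : M) (a : Fin (arity lam) → A) (b : Fin (arity mu) → A),
      tri lam mu → HigmanLE le (List.ofFn a) (List.ofFn b) → le (app lam a) (app mu b))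
    {t s : LTree (C ⊕ M)} {x z : A}
    (h : Emb (Sum.LiftRel (fun c c' => le (ι c) (ι c')) tri) t s)
    (ht : EvalsTo ι app t x) (hs : EvalsTo ι app s z) : le x z :=
  match h with
  | .subtree h hmem => by
    -- recursive calls come before `cases`, which would rewrite `h` out of structural reach
    have ih : ∀ {z}, EvalsTo ι app _ z → le x z := EvalsTo.le_of_emb hdiv hcompat h ht
    cases hs with
    | leaf c => simp at hmem
    | node μ ss b hss =>
      obtain ⟨i, rfl⟩ := List.mem_ofFn.mp hmem
      exact _root_.trans (ih (hss i)) (hdiv μ b i)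
  | .node hr hl => by
    have ih : ∀ {xs ys}, _ → _ → List.SublistForall₂ le xs ys :=
      EvalsTo.sublistForall₂_of_listEmb hdiv hcompat hl
    cases ht with
    | leaf c =>
      cases hs with
      | leaf c' => cases hr with | inl hr => exact hr
      | node => cases hr
    | node μ ts a hts =>
      cases hs with
      | leaf => cases hr
      | node ν ss b hss =>
        refine hcompat μ ν a b (Sum.liftRel_inr_inr.mp hr) (higmanLE_iff_sublistForall₂.mpr ?_)
        exact ih (List.forall₂_ofFn hts) (List.forall₂_ofFn hss)
termination_by structural h

theorem EvalsTo.sublistForall₂_of_listEmb [IsTrans A le]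
    (hdiv : ∀ (μ : M) (a : Fin (arity μ) → A) (i : Fin (arity μ)), le (a i) (app μ a))
    (hcompat : ∀ (lam mu : M) (a : Fin (arity lam) → A) (b : Fin (arity mu) → A),
      tri lam mu → HigmanLE le (List.ofFn a) (List.ofFn b) → le (app lam a) (app mu b))
    {ts ss : List (LTree (C ⊕ M))} {xs ys : List A}
    (h : ListEmb (Sum.LiftRel (fun c c' => le (ι c) (ι c')) tri) ts ss)
    (hts : List.Forall₂ (EvalsTo ι app) ts xs) (hss : List.Forall₂ (EvalsTo ι app) ss ys) :
    List.SublistForall₂ le xs ys := by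
  match h, hts, hss with
  | .nil, .nil, _ => exact .nil
  | .cons h hl, .cons ht hts, .cons hs hss =>
    exact .cons (EvalsTo.le_of_emb hdiv hcompat h ht hs)
      (EvalsTo.sublistForall₂_of_listEmb hdiv hcompat hl hts hss)
  | .skip hl, hts, .cons _ hss =>
    exact .cons_right (EvalsTo.sublistForall₂_of_listEmb hdiv hcompat hl hts hss)
termination_by structural h

end

end Evaluation

/-- Kruskal's theorem for labelled trees implies Higman's theorem for
ordered algebras: if (A, M, ≤) is an ordered algebra, (M, ⊲) a wqo of operations,
≤ a divisibility order compatible with ⊲, and A is generated by a wqo subset C,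
then (A, ≤) is a wqo. -/
theorem kruskal_implies_higman
    (KT : ∀ (Q : Type) (rQ : Q → Q → Prop), Reflexive rQ → Transitive rQ →
      IsWqo rQ → IsWqo (Emb rQ))
    -- the carrier, quasi-ordered
    (A : Type) (le : A → A → Prop) (hrefl : Reflexive le) (htrans : Transitive le)
    -- the operations, with their arities, quasi-ordered by ⊲, a wqo
    (M : Type) (arity : M → ℕ) (app : ∀ μ : M, (Fin (arity μ) → A) → A)
    (tri : M → M → Prop) (htrirefl : Reflexive tri) (htritrans : Transitive tri)
    (hMwqo : IsWqo tri)
    -- (A, M, ≤) is an ordered algebra: every operation is monotone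
    (hordered : ∀ (μ : M) (a b : Fin (arity μ) → A),
      (∀ i, le (a i) (b i)) → le (app μ a) (app μ b))
    -- ≤ is a divisibility order: each argument is below the value
    (hdiv : ∀ (μ : M) (a : Fin (arity μ) → A) (i : Fin (arity μ)), le (a i) (app μ a))
    -- ≤ is compatible with ⊲
    (hcompat : ∀ (lam mu : M) (a : Fin (arity lam) → A) (b : Fin (arity mu) → A),
      tri lam mu → HigmanLE le (List.ofFn a) (List.ofFn b) → le (app lam a) (app mu b))
    -- C is a generating subset of A which is a wqo under ≤
    (C : Type) (ι : C → A) (hCwqo : IsWqo (fun c c' : C => le (ι c) (ι c')))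
    (hgen : ∀ B : Set A, (∀ c : C, ι c ∈ B) →
      (∀ (μ : M) (a : Fin (arity μ) → A), (∀ i, a i ∈ B) → app μ a ∈ B) →
      ∀ x : A, x ∈ B) :
    IsWqo le := by
  have : IsTrans A le := ⟨fun _ _ _ h₁ h₂ => htrans h₁ h₂⟩
  intro f
  choose t ht using fun n => exists_evalsTo ι app hgen (f n)
  obtain ⟨i, j, hij, hemb⟩ := KT (C ⊕ M) (Sum.LiftRel (fun c c' => le (ι c) (ι c')) tri)
    (by rintro (c | μ); exacts [.inl (hrefl _), .inr (htrirefl μ)])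
    (fun _ _ _ h₁ h₂ => match h₁, h₂ with
      | .inl h₁, .inl h₂ => .inl (htrans h₁ h₂)
      | .inr h₁, .inr h₂ => .inr (htritrans h₁ h₂))
    (WellQuasiOrdered.sumLiftRel hCwqo hMwqo) t
  exact ⟨i, j, hij, EvalsTo.le_of_emb hdiv hcompat hemb (ht i) (ht j)⟩
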